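/- arXiv:1605.06325 — 2 statements merged into one kernel-verified Lean document; each statement's English description precedes it below -/
import Mathlib

section
/- Let V be a finite nonempty set of vertices (the current trees of the forest) and let f : V → V be a "nearest-neighbor" assignment with f(v) ≠ v for every v ∈ V. If we merge trees according to f, i.e., form the quotient of V by the equivalence relation generated by relating each v with f(v), then the number of resulting equivalence classes is at most ⌊|V| / 2⌋. In other words, one iteration of the SH (Borůvka-style) merging step decreases the number of trees by at least a factor of two. -/
attribute [local instance] Classical.propDecidable

open Finset

theorem Setoid.two_mul_card_quotient_le_card {α : Type*} [Fintype α] (s : Setoid α)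
    [Fintype (Quotient s)] (h : ∀ a, ∃ b, b ≠ a ∧ s a b) :
    2 * Fintype.card (Quotient s) ≤ Fintype.card α := by
  refine mul_card_image_le_card_of_maps_to (f := Quotient.mk s) (fun _ _ ↦ mem_univ _) 2 ?_
  rintro q -
  obtain ⟨a, rfl⟩ := Quotient.exists_rep q
  obtain ⟨b, hba, hab⟩ := h a
  refine one_lt_card.2 ⟨b, ?_, a, ?_, hba⟩ <;> simp [Quotient.sound hab]

theorem sh_merge_halves_general {V : Type*} [Fintype V] (f : V → V)
    (hf : ∀ v : V, f v ≠ v) :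
    Fintype.card (Quotient (Relation.EqvGen.setoid (fun v w : V => w = f v))) ≤
      Fintype.card V / 2 := by
  rw [Nat.le_div_iff_mul_le two_pos, mul_comm]
  exact Setoid.two_mul_card_quotient_le_card _ fun v ↦ ⟨f v, hf v, .rel _ _ rfl⟩

/-- One Borůvka-style merging iteration of the SH algorithm: merging the trees of a
finite nonempty forest `V` along a fixed-point-free nearest-neighbor assignment
`f : V → V` leaves at most `⌊|V| / 2⌋` trees, i.e. the number of trees decreases
by at least a factor of two. -/
theorem sh_merge_halves {V : Type*} [Fintype V] [Nonempty V] (f : V → V)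
    (hf : ∀ v : V, f v ≠ v) :
    Fintype.card (Quotient (Relation.EqvGen.setoid (fun v w : V => w = f v))) ≤
      Fintype.card V / 2 :=
  sh_merge_halves_general f hf
end

section
/- Let G be a simple graph on a finite vertex type V with edge weights w : Sym2 V → ℝ that are injective on the edge set of G, and suppose every vertex of G has at least one incident edge. For each vertex v, let e(v) denote the unique minimum-weight edge of G incident to v. Then the spanning subgraph of G whose edge set is {e(v) : v ∈ V} is acyclic. -/
namespace SimpleGraph.Walk

variable {V : Type*} {G : SimpleGraph V}

/-- In a closed trail every vertex meets an even number of edges, so a vertex on one edge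
lies on a second one. -/
theorem IsTrail.exists_mem_edges_ne_of_mem {u x : V} {c : G.Walk u u} (hc : c.IsTrail)
    {f : Sym2 V} (hf : f ∈ c.edges) (hx : x ∈ f) : ∃ f' ∈ c.edges, f' ≠ f ∧ x ∈ f' := by
  classical
  by_contra! hlone
  have hcount : c.edges.countP (x ∈ ·) = c.edges.count f := by
    rw [List.count_eq_countP]
    refine List.countP_congr fun f' hf' => ?_
    by_cases h : f' = f
    · simp [h, hx]
    · simp [h, hlone f' hf' h]
  have heven := (hc.even_countP_edges_iff x).mpr (absurd rfl)
  rw [hcount, List.count_eq_one_of_mem hc.edges_nodup hf] at heven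
  exact Nat.not_even_one heven

end SimpleGraph.Walk

theorem boruvka_step_acyclic_general {V : Type*} (G : SimpleGraph V)
    (w : Sym2 V → ℝ) (hw : Set.InjOn w G.edgeSet)
    (e : V → Sym2 V)
    (he : ∀ v : V, e v ∈ G.edgeSet ∧ v ∈ e v ∧
      ∀ e' ∈ G.edgeSet, v ∈ e' → w (e v) ≤ w e') :
    (SimpleGraph.fromEdgeSet (Set.range e)).IsAcyclic := by
  classical
  intro v c hc
  have hchosen : ∀ f ∈ c.edges, f ∈ Set.range e := fun f hf =>
    (SimpleGraph.edgeSet_fromEdgeSet _ ▸ c.edges_subset_edgeSet hf).1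
  have hnonempty : c.edges.toFinset.Nonempty :=
    List.toFinset_nonempty_iff _ |>.mpr (SimpleGraph.Walk.edges_eq_nil.not.mpr hc.not_nil)
  -- The other cycle edge at the end `u` of the heaviest cycle edge `e u` weighs at least `w (e u)`
  -- by the choice of `e u` and at most `w (e u)` by maximality; injectivity makes them equal.
  obtain ⟨f, hf, hmax⟩ := c.edges.toFinset.exists_max_image w hnonempty
  rw [List.mem_toFinset] at hf
  obtain ⟨u, rfl⟩ := hchosen f hf
  obtain ⟨f', hf', hne, hu⟩ := hc.isTrail.exists_mem_edges_ne_of_mem hf (he u).2.1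
  obtain ⟨u', rfl⟩ := hchosen f' hf'
  have hweight : w (e u') = w (e u) :=
    le_antisymm (hmax _ (List.mem_toFinset.mpr hf')) ((he u).2.2 _ (he u').1 hu)
  exact hne (hw (he u').1 (he u).1 hweight)

/-- Safety of the Borůvka step of the SH algorithm: with edge weights injective on
the edge set and every vertex incident to at least one edge, the subgraph formed by
each vertex's (unique) minimum-weight incident edge is acyclic. -/
theorem boruvka_step_acyclic {V : Type*} [Fintype V] (G : SimpleGraph V)
    (w : Sym2 V → ℝ) (hw : Set.InjOn w G.edgeSet)
    (hdeg : ∀ v : V, ∃ u, G.Adj v u)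
    (e : V → Sym2 V)
    (he : ∀ v : V, e v ∈ G.edgeSet ∧ v ∈ e v ∧
      ∀ e' ∈ G.edgeSet, v ∈ e' → w (e v) ≤ w e') :
    (SimpleGraph.fromEdgeSet (Set.range e)).IsAcyclic :=
  boruvka_step_acyclic_general G w hw e he
end
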